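/- Let T(ω) = A - ω B with A, B ∈ Mₙ(ℂ), B invertible, and suppose the generalized eigenvalue problem A x = ω B x has exactly one simple eigenvalue ω₀ strictly inside the circle Θ and no eigenvalues on Θ. Then Π = (1/(2πi)) ∮_Θ T(ω)⁻¹ dω is a nonzero matrix (it is a rank-one projection composed with B⁻¹ up to normalization, in particular Π ≠ 0). -/
import Mathlib

open Polynomial Matrix

lemma eval_detPoly {n : ℕ} (N M : Matrix (Fin n) (Fin n) ℂ) (t : ℂ) :
    ((evalRingHom t).mapMatrix (N.map C + (X : ℂ[X]) • M.map C)) = N + t • M := by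
  ext i j
  simp only [RingHom.mapMatrix_apply, Matrix.map_apply, Matrix.add_apply, Matrix.smul_apply,
    smul_eq_mul, coe_evalRingHom, eval_mul, eval_add, eval_X, eval_C]

lemma eval_detPoly' {n : ℕ} (N M : Matrix (Fin n) (Fin n) ℂ) (t : ℂ) :
    (N.map C + (X : ℂ[X]) • M.map C).det.eval t = (N + t • M).det := by
  have := RingHom.map_det (evalRingHom t) (N.map C + (X : ℂ[X]) • M.map C)
  rw [eval_detPoly] at this
  exact this

/-- Jacobi's formula at a point where the pencil is invertible. -/
lemma jacobi_at {n : ℕ} (N M : Matrix (Fin n) (Fin n) ℂ) (t₀ : ℂ)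
    (h : (N + t₀ • M).det ≠ 0) :
    (N.map C + (X : ℂ[X]) • M.map C).det.derivative.eval t₀ =
      Matrix.trace ((N + t₀ • M).adjugate * M) := by
  set U := N + t₀ • M with hU
  have hUdet : IsUnit U.det := isUnit_iff_ne_zero.mpr h
  set W := U⁻¹ * M with hW
  set s := (N.map C + (X : ℂ[X]) • M.map C).det with hs
  set Ed := (Matrix.det (1 + (X : ℂ[X]) • W.map C)).divX.divX with hEd
  have key : ∀ x : ℂ, s.eval (t₀ + x) = U.det * (1 + Matrix.trace W * x + Ed.eval x * x ^ 2) := by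
    intro x
    rw [eval_detPoly']
    have h1 : N + (t₀ + x) • M = U * (1 + x • W) := by
      rw [Matrix.mul_add, Matrix.mul_one, Matrix.mul_smul, hW, ← Matrix.mul_assoc,
        Matrix.mul_nonsing_inv U hUdet, Matrix.one_mul, hU, add_smul, add_assoc]
    rw [h1, Matrix.det_mul, Matrix.det_one_add_smul x W]
  have hderiv1 : deriv (fun x : ℂ => s.eval x) t₀ = U.det * Matrix.trace W := by
    have hshift := deriv_comp_const_add (f := fun x : ℂ => s.eval x) (a := t₀) (x := (0:ℂ))
    rw [add_zero] at hshift
    rw [← hshift]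
    have heq : (fun x : ℂ => s.eval (t₀ + x)) =
        fun x : ℂ => U.det * (1 + Matrix.trace W * x + Ed.eval x * x ^ 2) := funext key
    rw [heq]
    have hd : HasDerivAt (fun x : ℂ => U.det * (1 + Matrix.trace W * x + Ed.eval x * x ^ 2))
        (U.det * ((0 + Matrix.trace W * 1) + (Ed.derivative.eval 0 * 0 ^ 2 + Ed.eval 0 * (2 * 0 ^ 1)))) 0 := by
      refine HasDerivAt.const_mul _ ?_
      refine HasDerivAt.add (HasDerivAt.add ?_ ?_) ?_
      · simpa using (hasDerivAt_const (0:ℂ) (1:ℂ))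
      · simpa using (hasDerivAt_id (0:ℂ)).const_mul (Matrix.trace W)
      · exact (Ed.hasDerivAt 0).mul (hasDerivAt_pow 2 0)
    have := hd.deriv
    simpa using this
  rw [Polynomial.deriv] at hderiv1
  rw [hderiv1]
  have : U.det • W = U.adjugate * M := by
    rw [hW, ← Matrix.smul_mul]
    congr 1
    rw [Matrix.inv_def, Ring.inverse_eq_inv, smul_smul, mul_inv_cancel₀ h, one_smul]
  rw [← this, Matrix.trace_smul, smul_eq_mul]

/-- Jacobi's formula at 0 by continuity. -/
lemma jacobi {n : ℕ} (N M : Matrix (Fin n) (Fin n) ℂ)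
    (hs : (N.map C + (X : ℂ[X]) • M.map C).det ≠ 0) :
    (N.map C + (X : ℂ[X]) • M.map C).det.derivative.eval 0 =
      Matrix.trace (N.adjugate * M) := by
  set s := (N.map C + (X : ℂ[X]) • M.map C).det with hsdef
  have hdense : Dense {t : ℂ | s.eval t ≠ 0} := by
    have : {t : ℂ | s.eval t ≠ 0} = {t : ℂ | s.IsRoot t}ᶜ := by
      ext t; simp [Polynomial.IsRoot]
    rw [this]
    exact ((Polynomial.finite_setOf_isRoot hs).countable).dense_compl ℂ
  have hcont1 : Continuous fun t : ℂ => s.derivative.eval t := s.derivative.continuous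
  have hcont2 : Continuous fun t : ℂ => Matrix.trace ((N + t • M).adjugate * M) := by
    have hm : Continuous fun t : ℂ => N + t • M :=
      continuous_const.add (continuous_id.smul continuous_const)
    exact (hm.matrix_adjugate.matrix_mul continuous_const).matrix_trace
  have heq : (fun t : ℂ => s.derivative.eval t) =
      fun t : ℂ => Matrix.trace ((N + t • M).adjugate * M) := by
    apply Continuous.ext_on hdense hcont1 hcont2
    intro t ht
    have : (N + t • M).det ≠ 0 := by
      rw [← eval_detPoly']; exact ht
    exact jacobi_at N M t this
  have := congrFun heq 0
  simpa using this

open Metric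

/-- For the pencil T(ω) = A - ωB with B invertible, if det(A - ωB) has exactly one simple
root ω₀ strictly inside the circle Θ and no other roots in the closed disk, then
Π = (1/(2πi)) ∮_Θ T(ω)⁻¹ dω is a nonzero matrix. -/
theorem indicator_nonzero (n : ℕ) (c : ℂ) (R : ℝ) (hR : 0 < R)
    (A B : Matrix (Fin n) (Fin n) ℂ) (hB : IsUnit B) (ω₀ : ℂ)
    (hω₀ : ω₀ ∈ ball c R)
    (hroot : (A - ω₀ • B).det = 0)
    (hsimple : deriv (fun ω : ℂ => (A - ω • B).det) ω₀ ≠ 0)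
    (hother : ∀ ω ∈ closedBall c R, ω ≠ ω₀ → (A - ω • B).det ≠ 0) :
    ¬ (∀ i j, (1 / (2 * Real.pi * Complex.I)) *
        (∮ ω in C(c, R), (A - ω • B)⁻¹ i j) = 0) := by
  intro hPi
  -- Reformulate the pencil as N + t • M with N = A - ω₀ • B, M = -B
  set N := A - ω₀ • B with hN
  set M := -B with hM
  have hNM : ∀ ω : ℂ, A - ω • B = N + (ω - ω₀) • M := by
    intro ω
    rw [hN, hM, smul_neg, sub_smul]
    abel
  set s : ℂ[X] := (N.map Polynomial.C + (X : ℂ[X]) • M.map Polynomial.C).det with hsdef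
  have hds : ∀ ω : ℂ, (A - ω • B).det = s.eval (ω - ω₀) := by
    intro ω
    rw [hNM ω, eval_detPoly']
  -- the shifted polynomial p with p.eval ω = det (A - ω • B)
  set p : ℂ[X] := s.comp (X - Polynomial.C ω₀) with hpdef
  have hdp : ∀ ω : ℂ, (A - ω • B).det = p.eval ω := by
    intro ω
    rw [hds ω, hpdef, Polynomial.eval_comp]
    simp
  -- derivative of det function equals polynomial derivative
  have hderiv : ∀ ω : ℂ, deriv (fun ω : ℂ => (A - ω • B).det) ω = p.derivative.eval ω := by
    intro ω
    have : (fun ω : ℂ => (A - ω • B).det) = fun ω : ℂ => p.eval ω := funext hdp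
    rw [this, Polynomial.deriv]
  have hp'ω₀ : p.derivative.eval ω₀ ≠ 0 := by rw [← hderiv]; exact hsimple
  -- factor p = (X - C ω₀) * r
  have hproot : p.IsRoot ω₀ := by rw [Polynomial.IsRoot, ← hdp]; exact hroot
  obtain ⟨r, hr⟩ := (Polynomial.dvd_iff_isRoot.mpr hproot)
  have hrω₀ : r.eval ω₀ ≠ 0 := by
    have : p.derivative.eval ω₀ = r.eval ω₀ := by
      rw [hr]
      simp [Polynomial.derivative_mul]
    rwa [this] at hp'ω₀
  have hpfac : ∀ ω : ℂ, p.eval ω = (ω - ω₀) * r.eval ω := by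
    intro ω; rw [hr]; simp
  have hrball : ∀ ω ∈ closedBall c R, r.eval ω ≠ 0 := by
    intro ω hω
    rcases eq_or_ne ω ω₀ with rfl | hne
    · exact hrω₀
    · intro h0
      apply hother ω hω hne
      rw [hdp, hpfac, h0, mul_zero]
  -- the adjugate polynomial entries
  have hadj : ∀ (ω : ℂ) (i j : Fin n),
      (A - ω • B).adjugate i j =
        ((N.map Polynomial.C + (X : ℂ[X]) • M.map Polynomial.C).adjugate i j).eval (ω - ω₀) := by
    intro ω i j
    have := RingHom.map_adjugate (Polynomial.evalRingHom (ω - ω₀))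
      (N.map Polynomial.C + (X : ℂ[X]) • M.map Polynomial.C)
    rw [eval_detPoly N M (ω - ω₀)] at this
    rw [hNM ω, ← this]
    simp [RingHom.mapMatrix_apply, Matrix.map_apply]
  -- residue computation: every adjugate entry at ω₀ vanishes
  have hadj0 : (A - ω₀ • B).adjugate = 0 := by
    ext i j
    set q : ℂ[X] := ((N.map Polynomial.C + (X : ℂ[X]) • M.map Polynomial.C).adjugate i j).comp
      (X - Polynomial.C ω₀) with hqdef
    have hq : ∀ ω : ℂ, (A - ω • B).adjugate i j = q.eval ω := by
      intro ω
      rw [hadj ω i j, hqdef, Polynomial.eval_comp]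
      simp
    set g : ℂ → ℂ := fun ω => (r.eval ω)⁻¹ * q.eval ω with hgdef
    have hint : ∀ ω : ℂ, (A - ω • B)⁻¹ i j = (ω - ω₀)⁻¹ • g ω := by
      intro ω
      rw [Matrix.inv_def, Matrix.smul_apply, hq ω, Ring.inverse_eq_inv, hdp ω, hpfac ω,
        mul_inv, smul_eq_mul, smul_eq_mul, hgdef]
      ring
    have hcauchy : (∮ ω in C(c, R), (A - ω • B)⁻¹ i j)
        = (2 * Real.pi * Complex.I : ℂ) • g ω₀ := by
      have h1 : (∮ ω in C(c, R), (A - ω • B)⁻¹ i j)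
          = ∮ ω in C(c, R), (ω - ω₀)⁻¹ • g ω := by
        simp only [hint]
      rw [h1]
      refine Complex.circleIntegral_sub_inv_smul_of_differentiable_on_off_countable
        (s := ∅) Set.countable_empty hω₀ ?_ ?_
      · exact ((r.continuous.continuousOn.inv₀ hrball).mul q.continuous.continuousOn)
      · intro x hx
        have hxball : x ∈ closedBall c R := ball_subset_closedBall hx.1
        exact ((r.differentiableAt.inv (hrball x hxball)).mul q.differentiableAt)
    have := hPi i j
    rw [hcauchy, smul_eq_mul, ← mul_assoc] at this
    have h2pi : (2 * Real.pi * Complex.I : ℂ) ≠ 0 := by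
      simp [Real.pi_ne_zero, Complex.I_ne_zero, Complex.ofReal_ne_zero]
    rw [one_div, inv_mul_cancel₀ h2pi, one_mul] at this
    have hq0 : q.eval ω₀ = 0 := by
      rcases mul_eq_zero.mp this with h | h
      · exact absurd h (inv_ne_zero hrω₀)
      · exact h
    rw [Matrix.zero_apply, hq ω₀]
    exact hq0
  -- Jacobi's formula gives a contradiction with the simplicity of the root
  have hcR : c + (R : ℂ) ∈ closedBall c R := by
    simp [dist_eq_norm, Complex.norm_real, abs_of_pos hR]
  have hneR : c + (R : ℂ) ≠ ω₀ := by
    intro h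
    rw [← h, mem_ball, dist_eq_norm] at hω₀
    simp [Complex.norm_real, abs_of_pos hR] at hω₀
  have hs0 : s ≠ 0 := by
    intro h0
    apply hother _ hcR hneR
    rw [hds, h0]
    simp
  have hjac := jacobi N M hs0
  have hadj0' : N.adjugate = 0 := hadj0
  have hps : p.derivative.eval ω₀ = s.derivative.eval 0 := by
    rw [hpdef, Polynomial.derivative_comp]
    simp
  apply hp'ω₀
  rw [hps, hjac, hadj0', Matrix.zero_mul, Matrix.trace_zero]
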